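/- arXiv:1709.06063 — 2 statements merged into one kernel-verified Lean document; each statement's English description precedes it below -/
import Mathlib

section
/- With the genus 2 incidence relation on V = ((ℤ/2ℤ)²)² (a' incident to a'' iff exactly one of the two coordinate pairs agrees), any two distinct elements a''₁ ≠ a''₂ of V have exactly two common incident elements a' ∈ V. (Combinatorially: any two distinct tropes of the Kummer surface have exactly two nodes in common.) -/
/-- Any two distinct tropes of the Kummer surface have exactly two nodes in common,
combinatorially: on `V = ((ℤ/2ℤ)²)²` with the genus-2 incidence relation (exactly one
of the two coordinate pairs agrees), any two distinct elements of `V` have exactly two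
common incident elements. -/
theorem kummer_surface_two_common_nodes
    (b₁ b₂ : (ZMod 2 × ZMod 2) × (ZMod 2 × ZMod 2)) (hb : b₁ ≠ b₂) :
    (Finset.univ.filter
      (fun a : (ZMod 2 × ZMod 2) × (ZMod 2 × ZMod 2) =>
        ((a.1 = b₁.1 ∧ a.2 ≠ b₁.2) ∨ (a.1 ≠ b₁.1 ∧ a.2 = b₁.2)) ∧
        ((a.1 = b₂.1 ∧ a.2 ≠ b₂.2) ∨ (a.1 ≠ b₂.1 ∧ a.2 = b₂.2)))).card = 2 := by
  revert hb; revert b₂; revert b₁; decide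
end

section
/- Let E₁ be an elliptic curve in Weierstrass form over a field and G a finite subgroup of E₁ of prime order ℓ. Then the map sending a point P ∉ G to the pair (x(P) + Σ_{Q∈G\{0}} (x(P+Q) − x(Q)), y(P) + Σ_{Q∈G\{0}} (y(P+Q) − y(Q))) is invariant under translation by every element of G, i.e., replacing P by P + R for R ∈ G yields the same value. -/
/-!
Adding `f (P + 0)` to the sum over `G \ {0}` shows that the Vélu sum of `f` at `P` is
`∑_{Q ∈ G} f (P + Q)` minus a constant, and a sum over the whole (finite) subgroup `G` is
unchanged when `P` is translated by an element of `G`.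
-/

namespace VeluStatement

variable {F : Type*} [Field F] {W : WeierstrassCurve.Affine F}

/-- The `x`-coordinate of a point on a Weierstrass curve (junk value `0` at infinity). -/
def px : W.Point → F
  | .zero => 0
  | @WeierstrassCurve.Affine.Point.some _ _ _ x _ _ => x

/-- The `y`-coordinate of a point on a Weierstrass curve (junk value `0` at infinity). -/
def py : W.Point → F
  | .zero => 0
  | @WeierstrassCurve.Affine.Point.some _ _ _ _ y _ => y

section VeluSum

variable {A M : Type*} [AddCommGroup A]

theorem finsum_mem_addSubgroup_comp_add_left [AddCommMonoid M] (G : AddSubgroup A) (g : A → M)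
    {R : A} (hR : R ∈ G) :
    ∑ᶠ Q ∈ (G : Set A), g (R + Q) = ∑ᶠ Q ∈ (G : Set A), g Q := by
  refine finsum_mem_eq_of_bijOn (R + ·) ⟨fun Q hQ ↦ G.add_mem hR hQ, ?_, ?_⟩ fun _ _ ↦ rfl
  · exact fun Q _ Q' _ h ↦ add_left_cancel h
  · exact fun Q hQ ↦ ⟨-R + Q, G.add_mem (G.neg_mem hR) hQ, add_neg_cancel_left R Q⟩

variable [AddCommGroup M]

noncomputable def veluSum (G : AddSubgroup A) (f : A → M) (P : A) : M :=
  f P + ∑ᶠ Q ∈ (G : Set A) \ {0}, (f (P + Q) - f Q)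

theorem veluSum_eq {G : AddSubgroup A} (hG : (G : Set A).Finite) (f : A → M) (P : A) :
    veluSum G f P = ∑ᶠ Q ∈ (G : Set A), f (P + Q) - ∑ᶠ Q ∈ (G : Set A) \ {0}, f Q := by
  have hG' : ((G : Set A) \ {0}).Finite := hG.sdiff
  have hsplit :
      ∑ᶠ Q ∈ (G : Set A), f (P + Q) = f P + ∑ᶠ Q ∈ (G : Set A) \ {0}, f (P + Q) := by
    rw [← Set.insert_sdiff_self_of_mem G.zero_mem, finsum_mem_insert _ (fun h ↦ h.2 rfl) hG',
      add_zero, Set.insert_sdiff_self_of_mem G.zero_mem]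
  rw [veluSum, hsplit, finsum_mem_sub_distrib _ _ hG', add_sub_assoc]

theorem veluSum_add_of_mem {G : AddSubgroup A} (hG : (G : Set A).Finite) (f : A → M)
    (P : A) {R : A} (hR : R ∈ G) : veluSum G f (P + R) = veluSum G f P := by
  simp only [veluSum_eq hG, add_assoc]
  rw [finsum_mem_addSubgroup_comp_add_left G (fun Q ↦ f (P + Q)) hR]

end VeluSum

open Classical in
theorem velu_translation_invariant_general (G : AddSubgroup W.Point) (ℓ : ℕ)
    (hℓ : ℓ.Prime) (hG : Nat.card G = ℓ)
    (P : W.Point) (R : W.Point) (hR : R ∈ G) :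
    px (P + R) + ∑ᶠ Q ∈ (G : Set W.Point) \ {0}, (px (P + R + Q) - px Q) =
      px P + ∑ᶠ Q ∈ (G : Set W.Point) \ {0}, (px (P + Q) - px Q) ∧
    py (P + R) + ∑ᶠ Q ∈ (G : Set W.Point) \ {0}, (py (P + R + Q) - py Q) =
      py P + ∑ᶠ Q ∈ (G : Set W.Point) \ {0}, (py (P + Q) - py Q) := by
  have : Finite G := Nat.finite_of_card_ne_zero (hG ▸ hℓ.ne_zero)
  have hfin : (G : Set W.Point).Finite := Set.toFinite _
  exact ⟨veluSum_add_of_mem hfin px P hR, veluSum_add_of_mem hfin py P hR⟩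

open Classical in
/-- Vélu: for a finite subgroup `G` of prime order `ℓ` of an elliptic curve `E₁` in
Weierstrass form, the map
`P ↦ (x(P) + Σ_{Q∈G\{0}} (x(P+Q) − x(Q)), y(P) + Σ_{Q∈G\{0}} (y(P+Q) − y(Q)))`
is invariant under translation by any element `R ∈ G`, for `P ∉ G`. -/
theorem velu_translation_invariant (G : AddSubgroup W.Point) (ℓ : ℕ)
    (hℓ : ℓ.Prime) (hG : Nat.card G = ℓ)
    (P : W.Point) (hP : P ∉ G) (R : W.Point) (hR : R ∈ G) :
    px (P + R) + ∑ᶠ Q ∈ (G : Set W.Point) \ {0}, (px (P + R + Q) - px Q) =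
      px P + ∑ᶠ Q ∈ (G : Set W.Point) \ {0}, (px (P + Q) - px Q) ∧
    py (P + R) + ∑ᶠ Q ∈ (G : Set W.Point) \ {0}, (py (P + R + Q) - py Q) =
      py P + ∑ᶠ Q ∈ (G : Set W.Point) \ {0}, (py (P + Q) - py Q) :=
  velu_translation_invariant_general G ℓ hℓ hG P R hR

end VeluStatement
end
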